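/- arXiv:math/9801117 — 5 statements merged into one kernel-verified Lean document; each statement's English description precedes it below -/
import Mathlib

section
/- Let G be a group with generators t_i indexed by Z/(l+1) (l ≥ 2), subject to the braid relations of the cyclic diagram of type Â_l, together with an automorphism ζ of G cyclically shifting the generators, and impose the relations Δ_{Z/(l+1)−{i}} = Δ_{Z/(l+1)−{i,j}} ζ^{i−j} for all distinct i,j. Then t_l^2 = 1 in the resulting quotient. -/
/-!
Write `Δ_m` for the Garside element of the chain `t_1, …, t_m`. Far commutation lets each new
generator slide to the right, so `Δ_{m+1} = Δ_m · (t_{m+1} ⋯ t_1)`. The relations for `(0, l)` and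
`(0, l - 1)` read `Δ_l = Δ_{l-1} ζ` and `Δ_l = Δ_{l-2} t_l ζ²`. Put `r = t_{l-1} ⋯ t_1`: comparing
the first with `Δ_l = Δ_{l-1} t_l r` gives `ζ = t_l r`, comparing the second with
`Δ_{l-1} = Δ_{l-2} r` gives `r = t_l ζ`, hence `ζ = t_l² ζ`.
-/

namespace Stmt1

variable {G : Type*} [Group G]

/-- The product `t_{i+1} t_{i+2} ⋯ t_{i+m}`. -/
def chainC {n : ℕ} (t : ZMod n → G) (i : ZMod n) (m : ℕ) : G :=
  ((List.range m).map (fun s => t (i + (s : ZMod n) + 1))).prod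

/-- The Garside element of the type `A_m` chain `t_{i+1}, ..., t_{i+m}`:
`(t_{i+1} ⋯ t_{i+m})(t_{i+1} ⋯ t_{i+m-1}) ⋯ t_{i+1}`. -/
def garsideC {n : ℕ} (t : ZMod n → G) (i : ZMod n) (m : ℕ) : G :=
  (((List.range m).reverse).map (fun s => chainC t i (s + 1))).prod

def chainRevC {n : ℕ} (t : ZMod n → G) (i : ZMod n) : ℕ → G
  | 0 => 1
  | m + 1 => t (i + (m : ZMod n) + 1) * chainRevC t i m

@[simp]
lemma chainRevC_zero {n : ℕ} (t : ZMod n → G) (i : ZMod n) : chainRevC t i 0 = 1 :=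
  rfl

@[simp]
lemma chainRevC_succ {n : ℕ} (t : ZMod n → G) (i : ZMod n) (m : ℕ) :
    chainRevC t i (m + 1) = t (i + (m : ZMod n) + 1) * chainRevC t i m :=
  rfl

section Garside

variable {n : ℕ} (t : ZMod n → G) (i : ZMod n)

@[simp]
lemma chainC_zero : chainC t i 0 = 1 := by
  simp [chainC]

lemma chainC_succ (m : ℕ) : chainC t i (m + 1) = chainC t i m * t (i + (m : ZMod n) + 1) := by
  simp [chainC, List.range_succ]

@[simp]
lemma garsideC_zero : garsideC t i 0 = 1 := by
  simp [garsideC]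

lemma garsideC_succ (m : ℕ) : garsideC t i (m + 1) = chainC t i (m + 1) * garsideC t i m := by
  simp [garsideC, List.range_succ]

lemma garsideC_one : garsideC t i 1 = t (i + 1) := by
  simp [garsideC_succ, chainC_succ]

variable {t i}

lemma Commute.chainC_right {x : G} {m : ℕ}
    (h : ∀ u < m, Commute x (t (i + (u : ZMod n) + 1))) : Commute x (chainC t i m) := by
  induction m with
  | zero => simp
  | succ m ih =>
    rw [chainC_succ]
    exact (ih fun u hu => h u (by omega)).mul_right (h m (by omega))

lemma Commute.garsideC_right {x : G} {m : ℕ}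
    (h : ∀ u < m, Commute x (t (i + (u : ZMod n) + 1))) : Commute x (garsideC t i m) := by
  induction m with
  | zero => simp
  | succ m ih =>
    rw [garsideC_succ]
    exact (Commute.chainC_right h).mul_right (ih fun u hu => h u (by omega))

lemma garsideC_succ_eq_mul_chainRevC {m : ℕ}
    (hc : ∀ a b : ℕ, b + 2 ≤ a → a ≤ m →
      Commute (t (i + (a : ZMod n) + 1)) (t (i + (b : ZMod n) + 1))) :
    garsideC t i (m + 1) = garsideC t i m * chainRevC t i (m + 1) := by
  induction m with
  | zero => simp [garsideC_succ, chainC_succ]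
  | succ m ih =>
    have hslide : Commute (t (i + ((m + 1 : ℕ) : ZMod n) + 1)) (garsideC t i m) :=
      Commute.garsideC_right fun u hu => hc (m + 1) u (by omega) le_rfl
    calc garsideC t i (m + 2)
        = chainC t i (m + 1) * (t (i + ((m + 1 : ℕ) : ZMod n) + 1) * garsideC t i m) *
            chainRevC t i (m + 1) := by
          rw [garsideC_succ, chainC_succ, ih fun a b hab ham => hc a b hab (by omega)]
          simp only [mul_assoc]
      _ = garsideC t i (m + 1) * chainRevC t i (m + 2) := by
          rw [hslide.eq, garsideC_succ, chainRevC_succ t i (m + 1)]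
          simp only [mul_assoc]

end Garside

lemma ZMod.natCast_ne_natCast {n a b : ℕ} (ha : a < n) (hb : b < n) (hab : a ≠ b) :
    (a : ZMod n) ≠ b := by
  rwa [Ne, ZMod.natCast_eq_natCast_iff', Nat.mod_eq_of_lt ha, Nat.mod_eq_of_lt hb]

lemma ZMod.natCast_not_adjacent {n a b : ℕ} (ha : a < n) (hb : 1 ≤ b) (hab : b + 2 ≤ a) :
    (a : ZMod n) ≠ b ∧ (a : ZMod n) + 1 ≠ b ∧ (b : ZMod n) + 1 ≠ a := by
  refine ⟨natCast_ne_natCast ha (by omega) (by omega), fun h => ?_, ?_⟩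
  · refine natCast_ne_natCast ha (b := b - 1) (by omega) (by omega) ?_
    push_cast [Nat.cast_sub hb]
    linear_combination h
  · exact_mod_cast natCast_ne_natCast (a := b + 1) (by omega) ha (by omega)

lemma ZMod.val_zero_sub_natCast {n j : ℕ} (hj0 : 0 < j) (hj : j < n) :
    (0 - (j : ZMod n)).val = n - j := by
  have : NeZero n := ⟨by omega⟩
  have hj_ne : (j : ZMod n) ≠ 0 := by
    simpa using natCast_ne_natCast (b := 0) hj (by omega) (by omega)
  rw [zero_sub, ZMod.neg_val, if_neg hj_ne, ZMod.val_natCast_of_lt hj]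

lemma sq_eq_one_of_garside_eqs {D₀ D₁ D₂ a r z : G} (h₁ : D₁ = D₀ * r) (h₂ : D₂ = D₁ * (a * r))
    (hz₁ : D₂ = D₁ * z) (hz₂ : D₂ = D₀ * a * z ^ 2) : a ^ 2 = 1 := by
  have hz : z = a * r := mul_left_cancel (hz₁.symm.trans h₂)
  have hr : r = a * z := by
    have : D₀ * (r * z) = D₀ * (a * z * z) := by
      rw [← mul_assoc, ← h₁, ← hz₁, hz₂, sq]
      simp only [mul_assoc]
    exact mul_right_cancel (mul_left_cancel this)
  rw [hr, ← mul_assoc] at hz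
  rw [sq, ← mul_eq_right (b := z), ← hz]

theorem square_of_generator_eq_one_general (l : ℕ) (hl : 2 ≤ l)
    (t : ZMod (l + 1) → G) (z : G)
    (hcomm : ∀ i j : ZMod (l + 1), i ≠ j → i + 1 ≠ j → j + 1 ≠ i →
      t i * t j = t j * t i)
    -- the relations `Δ_{Z/(l+1)−{i}} = Δ_{Z/(l+1)−{i,j}} ζ^{i−j}` for all distinct `i, j`
    (hrel : ∀ i j : ZMod (l + 1), i ≠ j →
      garsideC t i l =
        garsideC t i ((j - i).val - 1) * garsideC t j ((i - j).val - 1) *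
          z ^ (i - j).val) :
    (t (l : ZMod (l + 1))) ^ 2 = 1 := by
  obtain ⟨k, rfl⟩ : ∃ k, l = k + 2 := ⟨l - 2, by omega⟩
  have hfar : ∀ a b : ℕ, 1 ≤ b → b + 2 ≤ a → a < k + 3 → Commute (t a) (t b) := by
    intro a b hb hab ha
    obtain ⟨h₁, h₂, h₃⟩ := ZMod.natCast_not_adjacent ha hb hab
    exact hcomm _ _ h₁ h₂ h₃
  have hΔ : ∀ m ≤ k + 1, garsideC t 0 (m + 1) = garsideC t 0 m * chainRevC t 0 (m + 1) :=
    fun m hm => garsideC_succ_eq_mul_chainRevC fun a b hab ham => by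
      simpa using hfar (a + 1) (b + 1) (by omega) (by omega) (by omega)
  have hrel₀ : ∀ j : ℕ, 0 < j → j ≤ k + 2 →
      garsideC t 0 (k + 2) = garsideC t 0 (j - 1) * garsideC t j (k + 2 - j) * z ^ (k + 3 - j) := by
    intro j hj0 hj
    have h := hrel 0 j
      (ZMod.natCast_ne_natCast (n := k + 2 + 1) (a := 0) (by omega) (by omega) (by omega))
    rwa [sub_zero, ZMod.val_zero_sub_natCast hj0 (by omega), ZMod.val_natCast_of_lt (by omega),
      show k + 2 + 1 - j - 1 = k + 2 - j by omega] at h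
  rw [show ((k + 2 : ℕ) : ZMod (k + 2 + 1)) = 0 + ((k + 1 : ℕ) : ZMod (k + 2 + 1)) + 1 by
    push_cast; ring]
  apply sq_eq_one_of_garside_eqs (hΔ k (by omega))
    ((hΔ (k + 1) le_rfl).trans (congrArg (garsideC t 0 (k + 1) * ·) (chainRevC_succ t 0 (k + 1))))
  · simpa using hrel₀ (k + 2) (by omega) le_rfl
  · simpa [garsideC_one] using hrel₀ (k + 1) (by omega) (by omega)

theorem square_of_generator_eq_one (l : ℕ) (hl : 2 ≤ l)
    (t : ZMod (l + 1) → G) (z : G)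
    -- the `t i` (together with `z`) generate `G`
    (hgen : Subgroup.closure (Set.range t ∪ {z}) = ⊤)
    -- `ζ` cyclically shifts the generators
    (hconj : ∀ i : ZMod (l + 1), z * t i * z⁻¹ = t (i + 1))
    -- braid relations of the cyclic diagram `Â_l`
    (hbraid : ∀ i : ZMod (l + 1), t i * t (i + 1) * t i = t (i + 1) * t i * t (i + 1))
    (hcomm : ∀ i j : ZMod (l + 1), i ≠ j → i + 1 ≠ j → j + 1 ≠ i →
      t i * t j = t j * t i)
    -- the relations `Δ_{Z/(l+1)−{i}} = Δ_{Z/(l+1)−{i,j}} ζ^{i−j}` for all distinct `i, j`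
    (hrel : ∀ i j : ZMod (l + 1), i ≠ j →
      garsideC t i l =
        garsideC t i ((j - i).val - 1) * garsideC t j ((i - j).val - 1) *
          z ^ (i - j).val) :
    (t (l : ZMod (l + 1))) ^ 2 = 1 :=
  square_of_generator_eq_one_general l hl t z hcomm hrel

end Stmt1
end

section
/- The reduced Artin group of affine type Â_l for l > 1 is isomorphic to the symmetric group S_{l+1} via the natural surjection onto the linear finite Weyl group modulo its center. -/
/-!
STATEMENT 2: The reduced Artin group of affine type `Â_l` for `l > 1` is isomorphic
to the symmetric group `S_{l+1}` via the natural surjection onto the linear finite Weyl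
group modulo its center.

The reduced Artin group is the quotient of `Art_{Â_l} ⋊ S(Γ)` by the relations
`Δ_i g_i = 1` (for `i` special) and `Δ_{ij} g_{ij} = 1` (for `i, j` distinct special).
For `Γ = Â_l` (a polygon with `l+1` vertices, all special), `S(Γ) = Aut(Γ)` is the
dihedral group of order `2(l+1)`; `g_i` is the reflection of the polygon fixing `i`
(`x ↦ 2i − x`) and `g_{ij}` the reflection interchanging `i` and `j` (`x ↦ i + j − x`).
We realize the semidirect product and its quotient as a single presented group on
generators `T i` (`i ∈ Z/(l+1)`) and `D g` (`g ∈ DihedralGroup (l+1)`).  For `l > 1`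
the linear Weyl group of type `Â_l` is `S_{l+1}` and does not contain `−1`, so
`W̄ = S_{l+1}`, realized here as `Equiv.Perm (ZMod (l+1))`, the generator `t_i`
mapping to the transposition of `i` and `i+1`.
-/

namespace Stmt2

open FreeGroup

/-- The left action of the dihedral group on the vertices `ZMod n` of the polygon:
rotations and reflections. -/
def dact {n : ℕ} : DihedralGroup n → ZMod n → ZMod n
  | DihedralGroup.r a, x => x - a
  | DihedralGroup.sr a, x => a - x

/-- abbreviation for the free-group generator `t_i`. -/
def T {l : ℕ} (i : ZMod (l + 1)) : FreeGroup (ZMod (l + 1) ⊕ DihedralGroup (l + 1)) :=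
  FreeGroup.of (Sum.inl i)

/-- abbreviation for the free-group generator corresponding to `g ∈ S(Γ)`. -/
def D {l : ℕ} (g : DihedralGroup (l + 1)) :
    FreeGroup (ZMod (l + 1) ⊕ DihedralGroup (l + 1)) :=
  FreeGroup.of (Sum.inr g)

/-- The product `t_{i+1} t_{i+2} ⋯ t_{i+m}` in the free group. -/
def chainF (l : ℕ) (i : ZMod (l + 1)) (m : ℕ) :
    FreeGroup (ZMod (l + 1) ⊕ DihedralGroup (l + 1)) :=
  ((List.range m).map (fun s => T (i + (s : ZMod (l + 1)) + 1))).prod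

/-- The Garside element of the type `A_m` chain `t_{i+1}, ..., t_{i+m}`. -/
def garsideF (l : ℕ) (i : ZMod (l + 1)) (m : ℕ) :
    FreeGroup (ZMod (l + 1) ⊕ DihedralGroup (l + 1)) :=
  (((List.range m).reverse).map (fun s => chainF l i (s + 1))).prod

/-- Relators of the reduced Artin group of type `Â_l`: braid relations, the
multiplication table of `S(Γ)` (dihedral), the semidirect-product (conjugation)
relations, and the Garside relations `Δ_i g_i = 1`, `Δ_{ij} g_{ij} = 1`. -/
def redArtinRels (l : ℕ) : Set (FreeGroup (ZMod (l + 1) ⊕ DihedralGroup (l + 1))) :=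
  { w | (∃ i : ZMod (l + 1),
          w = T i * T (i + 1) * T i * (T (i + 1) * T i * T (i + 1))⁻¹) ∨
        (∃ i j : ZMod (l + 1), i ≠ j ∧ i + 1 ≠ j ∧ j + 1 ≠ i ∧
          w = T i * T j * (T j * T i)⁻¹) ∨
        (∃ g h : DihedralGroup (l + 1), w = D g * D h * (D (g * h))⁻¹) ∨
        (∃ (g : DihedralGroup (l + 1)) (i : ZMod (l + 1)),
          w = D g * T i * (D g)⁻¹ * (T (dact g i))⁻¹) ∨
        -- `Δ_i g_i = 1` for every (special) vertex `i`; `g_i = sr (2i)` fixes `i`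
        (∃ i : ZMod (l + 1),
          w = garsideF l i l * D (DihedralGroup.sr (2 * i))) ∨
        -- `Δ_{ij} g_{ij} = 1` for distinct (special) vertices; `g_{ij} = sr (i+j)`
        (∃ i j : ZMod (l + 1), i ≠ j ∧
          w = garsideF l i ((j - i).val - 1) * garsideF l j ((i - j).val - 1) *
              D (DihedralGroup.sr (i + j))) }

/-- The reduced Artin group of affine type `Â_l`. -/
abbrev ReducedArtinAhat (l : ℕ) := PresentedGroup (redArtinRels l)

end Stmt2

/-!
Sending `t_i` to the transposition `(i, i + 1)` and `S(Γ)` to the dihedral symmetries of the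
`l + 1` letters respects every relator: a Garside element goes to the reversal of an arc of
letters, which makes `Δ_i g_i` and `Δ_{ij} g_{ij}` trivial. This gives a surjection onto
`S_{l+1}`. Conversely, the Garside relations for `{i}`, `{i - 1, i}` and `{i - 2, i}` force
`t_i² = 1` and identify `t_{i+1} ⋯ t_{i+l}` with a rotation, so the group is generated by
`t_0, …, t_{l-1}`, which satisfy the Coxeter relations of type `A_l`. A group generated by such
elements has at most `(l + 1)!` elements, since the words `x_{k-1} ⋯ x_0`, `k ≤ l`, represent
all cosets of the subgroup generated by `x_1, …, x_{l-1}`. Hence the surjection is bijective.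
-/

section CoxeterTypeA

open Subgroup Set

variable {H : Type*} [Group H]

structure IsCoxeterTypeA (n : ℕ) (x : ℕ → H) : Prop where
  mul_self : ∀ i < n, x i * x i = 1
  braid : ∀ i, i + 1 < n → x i * x (i + 1) * x i = x (i + 1) * x i * x (i + 1)
  comm : ∀ i j, i + 2 ≤ j → j < n → x i * x j = x j * x i

def descProd (x : ℕ → H) : ℕ → H
  | 0 => 1
  | k + 1 => x k * descProd x k

namespace IsCoxeterTypeA

variable {n : ℕ} {x : ℕ → H}

lemma shift (h : IsCoxeterTypeA (n + 1) x) : IsCoxeterTypeA n (fun i ↦ x (i + 1)) where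
  mul_self i hi := h.mul_self (i + 1) (by omega)
  braid i hi := h.braid (i + 1) (by omega)
  comm i j hij hj := h.comm (i + 1) (j + 1) (by omega) (by omega)

lemma commute_descProd (h : IsCoxeterTypeA n x) {i : ℕ} (hi : i < n) :
    ∀ k, k + 1 ≤ i → x i * descProd x k = descProd x k * x i
  | 0, _ => by simp [descProd]
  | k + 1, hk => by
    rw [descProd, ← mul_assoc, ← h.comm k i (by omega) hi, mul_assoc,
      h.commute_descProd hi k (by omega), mul_assoc]

lemma mul_descProd_of_add_two_le (h : IsCoxeterTypeA n x) {i k : ℕ} (hik : i + 2 ≤ k)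
    (hk : k ≤ n) : x i * descProd x k = descProd x k * x (i + 1) := by
  induction k, hik using Nat.le_induction with
  | base =>
    simp only [descProd]
    calc x i * (x (i + 1) * (x i * descProd x i))
        = x i * x (i + 1) * x i * descProd x i := by simp only [mul_assoc]
      _ = x (i + 1) * x i * (x (i + 1) * descProd x i) := by
        rw [h.braid i (by omega)]; simp only [mul_assoc]
      _ = x (i + 1) * (x i * descProd x i) * x (i + 1) := by
        rw [h.commute_descProd (by omega) i le_rfl]; simp only [mul_assoc]
  | succ k hik ih =>
    rw [descProd, ← mul_assoc, h.comm i k (by omega) (by omega), mul_assoc,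
      ih (by omega), mul_assoc]

lemma exists_descProd_mul_eq_mul (h : IsCoxeterTypeA (n + 1) x) {i k : ℕ} {g : H}
    (hi : i < n + 1) (hk : k ≤ n + 1) (hg : g ∈ closure ((fun j ↦ x (j + 1)) '' Iio n)) :
    ∃ k' ≤ n + 1, ∃ g' ∈ closure ((fun j ↦ x (j + 1)) '' Iio n),
      descProd x k' * g' = x i * (descProd x k * g) := by
  rcases lt_trichotomy (i + 1) k with hlt | rfl | hgt
  · refine ⟨k, hk, x (i + 1) * g, mul_mem (subset_closure ⟨i, by simp; omega, rfl⟩) hg, ?_⟩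
    rw [← mul_assoc, ← mul_assoc, h.mul_descProd_of_add_two_le hlt hk]
  · refine ⟨i, by omega, g, hg, ?_⟩
    rw [descProd, ← mul_assoc, ← mul_assoc, h.mul_self i hi, one_mul]
  · rcases (Nat.lt_succ_iff.mp hgt).eq_or_lt with rfl | hlt
    · exact ⟨k + 1, hi, g, hg, by rw [descProd, mul_assoc]⟩
    · obtain ⟨j, rfl⟩ : ∃ j, i = j + 1 := ⟨i - 1, by omega⟩
      refine ⟨k, hk, x (j + 1) * g, mul_mem (subset_closure ⟨j, by simp; omega, rfl⟩) hg, ?_⟩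
      rw [← mul_assoc, ← mul_assoc, h.commute_descProd hi k (by omega)]

lemma exists_descProd_mul_eq (h : IsCoxeterTypeA (n + 1) x) {y : H}
    (hy : y ∈ closure (x '' Iio (n + 1))) :
    ∃ k ≤ n + 1, ∃ g ∈ closure ((fun j ↦ x (j + 1)) '' Iio n), descProd x k * g = y := by
  induction hy using closure_induction_left with
  | one => exact ⟨0, by omega, 1, one_mem _, by simp [descProd]⟩
  | mul_left _ hs _ _ ih =>
    obtain ⟨i, hi, rfl⟩ := hs
    obtain ⟨k, hk, g, hg, rfl⟩ := ih
    exact h.exists_descProd_mul_eq_mul hi hk hg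
  | inv_mul_cancel _ hs _ _ ih =>
    obtain ⟨i, hi, rfl⟩ := hs
    obtain ⟨k, hk, g, hg, rfl⟩ := ih
    rw [inv_eq_of_mul_eq_one_right (h.mul_self i hi)]
    exact h.exists_descProd_mul_eq_mul hi hk hg

theorem finite_closure_and_card_le (h : IsCoxeterTypeA n x) :
    Finite (closure (x '' Iio n)) ∧ Nat.card (closure (x '' Iio n)) ≤ (n + 1).factorial := by
  induction n generalizing x with
  | zero => simpa using Finite.of_subsingleton
  | succ n ih =>
    obtain ⟨hfin, hcard⟩ := ih h.shift
    set K := closure ((fun j ↦ x (j + 1)) '' Iio n)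
    let cover : Fin (n + 2) × K → H := fun p ↦ descProd x p.1 * p.2
    have hcover : (closure (x '' Iio (n + 1)) : Set H) ⊆ range cover := by
      intro y hy
      obtain ⟨k, hk, g, hg, rfl⟩ := h.exists_descProd_mul_eq hy
      exact ⟨(⟨k, by omega⟩, ⟨g, hg⟩), rfl⟩
    refine ⟨((finite_range cover).subset hcover).to_subtype, ?_⟩
    calc Nat.card (closure (x '' Iio (n + 1))) ≤ Nat.card (range cover) :=
          Nat.card_mono (finite_range cover) hcover
      _ ≤ Nat.card (Fin (n + 2) × K) := Finite.card_range_le cover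
      _ = (n + 2) * Nat.card K := by simp [Nat.card_prod]
      _ ≤ (n + 2) * (n + 1).factorial := Nat.mul_le_mul_left _ hcard
      _ = (n + 2).factorial := (Nat.factorial_succ (n + 1)).symm

end IsCoxeterTypeA

end CoxeterTypeA

open Equiv

lemma Equiv.swap_braid {α : Type*} [DecidableEq α] {a b c : α} (hab : a ≠ b) (hac : a ≠ c)
    (hbc : b ≠ c) : swap a b * swap b c * swap a b = swap b c * swap a b * swap b c := by
  rw [swap_mul_swap_mul_swap hab hac, swap_comm a b, swap_comm b c,
    swap_mul_swap_mul_swap hbc.symm hac.symm, swap_comm]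

lemma Equiv.Perm.closure_swap_add_one (n : ℕ) :
    Subgroup.closure (Set.range fun i : ZMod (n + 1) ↦ swap i (i + 1)) = ⊤ := by
  -- `ZMod (n + 1)` is `Fin (n + 1)` by definition, with the same addition
  show Subgroup.closure (Set.range fun i : Fin (n + 1) ↦ swap i (i + 1)) = ⊤
  rw [eq_top_iff, ← Subgroup.closure_eq_top_of_mclosure_eq_top (mclosure_swap_castSucc_succ n),
    Subgroup.closure_le]
  rintro _ ⟨i, rfl⟩
  exact Subgroup.subset_closure ⟨i.castSucc, by simp only [Fin.coeSucc_eq_succ]⟩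

namespace ZMod

variable {n : ℕ}

lemma natCast_inj_of_le {a b : ℕ} (ha : a ≤ n) (hb : b ≤ n) :
    (a : ZMod (n + 1)) = b ↔ a = b := by
  rw [natCast_eq_natCast_iff', Nat.mod_eq_of_lt (by omega), Nat.mod_eq_of_lt (by omega)]

lemma natCast_ne_zero_of_le {k : ℕ} (h0 : 0 < k) (hk : k ≤ n) : (k : ZMod (n + 1)) ≠ 0 := by
  rw [Ne, natCast_eq_zero_iff]
  exact fun h ↦ absurd (Nat.le_of_dvd h0 h) (by omega)

lemma self_ne_add_natCast {k : ℕ} (h0 : 0 < k) (hk : k ≤ n) (x : ZMod (n + 1)) : x ≠ x + k := by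
  simpa using natCast_ne_zero_of_le h0 hk

lemma exists_eq_add_natCast (c x : ZMod (n + 1)) :
    ∃ k ≤ n, x = c + k ∧ (x - c).val = k :=
  ⟨(x - c).val, Nat.lt_succ_iff.mp (val_lt _), by rw [natCast_zmod_val]; ring, rfl⟩

end ZMod

namespace Stmt2

open Equiv DihedralGroup

variable {l : ℕ}

lemma chainF_succ (i : ZMod (l + 1)) (m : ℕ) :
    chainF l i (m + 1) = chainF l i m * T (i + (m : ZMod (l + 1)) + 1) := by
  simp [chainF, List.range_succ]

lemma garsideF_succ (i : ZMod (l + 1)) (m : ℕ) :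
    garsideF l i (m + 1) = chainF l i (m + 1) * garsideF l i m := by
  simp [garsideF, List.range_succ]

/-- A reflection `x ↦ a - x` of the vertices acts on the `l + 1` letters permuted by `S_{l+1}`
as `x ↦ a + 1 - x`, so that it conjugates `swap i (i + 1)` into `swap (a - i) (a - i + 1)`. -/
def dihedralPerm (l : ℕ) : DihedralGroup (l + 1) →* Perm (ZMod (l + 1)) where
  toFun
    | r a => Equiv.subRight a
    | sr a => Equiv.subLeft (a + 1)
  map_one' := by ext x; exact sub_zero x
  map_mul' := by
    rintro (a | a) (b | b) <;> ext x <;>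
      simp only [r_mul_r, r_mul_sr, sr_mul_r, sr_mul_sr, Perm.mul_apply, Equiv.subRight_apply,
        Equiv.subLeft_apply] <;> ring

lemma dihedralPerm_r_apply (a x : ZMod (l + 1)) : dihedralPerm l (r a) x = x - a := rfl

lemma dihedralPerm_sr_apply (a x : ZMod (l + 1)) : dihedralPerm l (sr a) x = a + 1 - x := rfl

def generatorPerm (l : ℕ) : ZMod (l + 1) ⊕ DihedralGroup (l + 1) → Perm (ZMod (l + 1)) :=
  Sum.elim (fun i ↦ swap i (i + 1)) (dihedralPerm l)

lemma lift_generatorPerm_T (i : ZMod (l + 1)) :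
    FreeGroup.lift (generatorPerm l) (T i) = swap i (i + 1) := by
  simp [T, generatorPerm]

lemma lift_generatorPerm_D (g : DihedralGroup (l + 1)) :
    FreeGroup.lift (generatorPerm l) (D g) = dihedralPerm l g := by
  simp [D, generatorPerm]

lemma lift_chainF_apply {m : ℕ} (hm : m ≤ l) (i : ZMod (l + 1)) {k : ℕ} (hk : k ≤ l) :
    FreeGroup.lift (generatorPerm l) (chainF l i m) (i + 1 + k) =
      i + 1 + ((if k < m then k + 1 else if k = m then 0 else k : ℕ) : ZMod (l + 1)) := by
  induction m generalizing k with
  | zero =>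
    have : (if k < 0 then k + 1 else if k = 0 then 0 else k) = k := by split_ifs <;> omega
    rw [this]
    simp [chainF]
  | succ m ih =>
    have hswap : swap (i + 1 + m) (i + 1 + (m + 1 : ℕ)) (i + 1 + k) =
        i + 1 + ((if k = m then m + 1 else if k = m + 1 then m else k : ℕ) : ZMod (l + 1)) := by
      simp only [swap_apply_def, add_right_inj, ZMod.natCast_inj_of_le hk (by omega : m ≤ l),
        ZMod.natCast_inj_of_le hk hm]
      split_ifs <;> first | omega | rfl
    rw [chainF_succ, map_mul, Perm.mul_apply, lift_generatorPerm_T,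
      show i + (m : ZMod (l + 1)) + 1 = i + 1 + m by ring, add_assoc (i + 1),
      ← Nat.cast_add_one, hswap, ih (by omega) (by split_ifs <;> omega)]
    congr 2
    split_ifs <;> omega

lemma lift_garsideF_apply_add {m : ℕ} (hm : m ≤ l) (i : ZMod (l + 1)) {k : ℕ} (hk : k ≤ l) :
    FreeGroup.lift (generatorPerm l) (garsideF l i m) (i + 1 + k) =
      i + 1 + ((if k ≤ m then m - k else k : ℕ) : ZMod (l + 1)) := by
  induction m generalizing k with
  | zero =>
    have : (if k ≤ 0 then 0 - k else k) = k := by split_ifs <;> omega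
    rw [this]
    simp [garsideF]
  | succ m ih =>
    rw [garsideF_succ, map_mul, Perm.mul_apply, ih (by omega) hk,
      lift_chainF_apply hm i (by split_ifs <;> omega)]
    congr 2
    split_ifs <;> omega

/-- The image of the Garside element is the reversal of the arc of letters from `i + 1` to
`i + 1 + m`. -/
lemma lift_garsideF_apply {m : ℕ} (hm : m ≤ l) (i x : ZMod (l + 1)) :
    FreeGroup.lift (generatorPerm l) (garsideF l i m) x =
      if (x - (i + 1)).val ≤ m then 2 * (i + 1) + m - x else x := by
  obtain ⟨k, hk, rfl, hval⟩ := ZMod.exists_eq_add_natCast (i + 1) x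
  rw [hval, lift_garsideF_apply_add hm i hk]
  split_ifs with hkm
  · rw [Nat.cast_sub hkm]; ring
  · rfl

lemma lift_garsideF_vertex (i : ZMod (l + 1)) :
    FreeGroup.lift (generatorPerm l) (garsideF l i l) = dihedralPerm l (sr (2 * i)) := by
  ext x
  rw [lift_garsideF_apply le_rfl, if_pos (Nat.lt_succ_iff.mp (ZMod.val_lt _)),
    dihedralPerm_sr_apply]
  linear_combination ZMod.natCast_self' l

/-- The two Garside elements reverse the complementary arcs `[i + 1, j]` and `[j + 1, i]`, and on
either arc the reversal is `x ↦ i + j + 1 - x`. -/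
lemma lift_garsideF_edge {i j : ZMod (l + 1)} (hij : i ≠ j) :
    FreeGroup.lift (generatorPerm l) (garsideF l i ((j - i).val - 1)) *
      FreeGroup.lift (generatorPerm l) (garsideF l j ((i - j).val - 1)) =
      dihedralPerm l (sr (i + j)) := by
  set d := (j - i).val
  have hd : 0 < d := Nat.pos_of_ne_zero ((ZMod.val_ne_zero _).mpr (sub_ne_zero.mpr hij.symm))
  have hdl : d ≤ l := Nat.lt_succ_iff.mp (ZMod.val_lt _)
  have hdcast : (d : ZMod (l + 1)) = j - i := ZMod.natCast_zmod_val _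
  have hval : (i - j).val - 1 = l - d := by
    rw [← neg_sub, ZMod.neg_val, if_neg (sub_ne_zero.mpr hij.symm)]
    omega
  ext y
  obtain ⟨a, ha, rfl, -⟩ := ZMod.exists_eq_add_natCast (j + 1) y
  rw [Perm.mul_apply, hval, lift_garsideF_apply_add (by omega) j ha, dihedralPerm_sr_apply]
  split_ifs with haj
  · have hz : j + 1 + ((l - d - a : ℕ) : ZMod (l + 1)) - (i + 1) =
        ((l - a : ℕ) : ZMod (l + 1)) := by
      push_cast [Nat.cast_sub hdl, Nat.cast_sub haj, Nat.cast_sub ha]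
      linear_combination -hdcast
    rw [lift_garsideF_apply (by omega), hz, ZMod.val_natCast_of_lt (by omega),
      if_neg (by omega)]
    push_cast [Nat.cast_sub hdl, Nat.cast_sub haj]
    linear_combination -hdcast + ZMod.natCast_self' l
  · have hz : j + 1 + a - (i + 1) = ((a + d - (l + 1) : ℕ) : ZMod (l + 1)) := by
      push_cast [Nat.cast_sub (by omega : l + 1 ≤ a + d)]
      linear_combination -hdcast + ZMod.natCast_self' l
    rw [lift_garsideF_apply (by omega), hz, ZMod.val_natCast_of_lt (by omega),
      if_pos (by omega)]
    push_cast [Nat.cast_sub hd]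
    linear_combination hdcast

lemma dihedralPerm_mul_swap_mul_inv (g : DihedralGroup (l + 1)) (i : ZMod (l + 1)) :
    dihedralPerm l g * swap i (i + 1) * (dihedralPerm l g)⁻¹ = swap (dact g i) (dact g i + 1) := by
  rw [← swap_apply_apply]
  rcases g with a | a
  · rw [dihedralPerm_r_apply, dihedralPerm_r_apply, dact]
    ring_nf
  · rw [dihedralPerm_sr_apply, dihedralPerm_sr_apply, dact, swap_comm]
    ring_nf

theorem lift_generatorPerm_eq_one_of_mem (hl : 2 ≤ l) :
    ∀ w ∈ redArtinRels l, FreeGroup.lift (generatorPerm l) w = 1 := by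
  rintro w (⟨i, rfl⟩ | ⟨i, j, hij, hij1, hji1, rfl⟩ | ⟨g, h, rfl⟩ | ⟨g, i, rfl⟩ | ⟨i, rfl⟩ |
    ⟨i, j, hij, rfl⟩) <;>
    simp only [map_mul, map_inv, lift_generatorPerm_T, lift_generatorPerm_D,
      mul_inv_eq_one]
  · have h1 := ZMod.self_ne_add_natCast (n := l) one_pos (by omega)
    have h2 := ZMod.self_ne_add_natCast (n := l) two_pos hl
    push_cast at h1 h2
    exact swap_braid (h1 i) (by rw [add_assoc, one_add_one_eq_two]; exact h2 i) (h1 (i + 1))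
  · have h1 := ZMod.self_ne_add_natCast (n := l) one_pos (by omega)
    push_cast at h1
    refine (Perm.disjoint_swap_swap ?_).commute.eq
    simp only [List.nodup_cons, List.mem_cons, List.not_mem_nil, or_false, List.nodup_nil,
      add_left_inj]
    refine ⟨?_, ?_, h1 j, not_false, trivial⟩
    · rintro (h | h | h)
      exacts [h1 i h, hij h, hji1 h.symm]
    · rintro (h | h)
      exacts [hij1 h, hij h]
  · exact dihedralPerm_mul_swap_mul_inv g i
  · rw [lift_garsideF_vertex, ← map_mul, sr_mul_sr, sub_self, ← DihedralGroup.one_def,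
      map_one]
  · rw [lift_garsideF_edge hij, ← map_mul, sr_mul_sr, sub_self, ← DihedralGroup.one_def,
      map_one]

def toPerm (hl : 2 ≤ l) : ReducedArtinAhat l →* Perm (ZMod (l + 1)) :=
  PresentedGroup.toGroup (lift_generatorPerm_eq_one_of_mem hl)

lemma toPerm_of_inl (hl : 2 ≤ l) (i : ZMod (l + 1)) :
    toPerm hl (PresentedGroup.of (Sum.inl i)) = swap i (i + 1) :=
  PresentedGroup.toGroup.of _

lemma toPerm_surjective (hl : 2 ≤ l) : Function.Surjective (toPerm hl) := by
  rw [← MonoidHom.range_eq_top, eq_top_iff, ← Perm.closure_swap_add_one, Subgroup.closure_le]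
  rintro _ ⟨i, rfl⟩
  exact ⟨_, toPerm_of_inl hl i⟩

def tGen (l : ℕ) (i : ZMod (l + 1)) : ReducedArtinAhat l := PresentedGroup.of (Sum.inl i)

def dihedralHom (l : ℕ) : DihedralGroup (l + 1) →* ReducedArtinAhat l :=
  MonoidHom.mk' (fun g ↦ PresentedGroup.of (Sum.inr g)) fun g h ↦
    (PresentedGroup.mk_eq_mk_of_mul_inv_mem (Or.inr (Or.inr (Or.inl ⟨g, h, rfl⟩)))).symm

def chain (l : ℕ) (i : ZMod (l + 1)) (m : ℕ) : ReducedArtinAhat l :=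
  PresentedGroup.mk _ (chainF l i m)

def garside (l : ℕ) (i : ZMod (l + 1)) (m : ℕ) : ReducedArtinAhat l :=
  PresentedGroup.mk _ (garsideF l i m)

lemma tGen_braid (i : ZMod (l + 1)) :
    tGen l i * tGen l (i + 1) * tGen l i = tGen l (i + 1) * tGen l i * tGen l (i + 1) :=
  PresentedGroup.mk_eq_mk_of_mul_inv_mem (Or.inl ⟨i, rfl⟩)

lemma tGen_comm {i j : ZMod (l + 1)} (hij : i ≠ j) (hij1 : i + 1 ≠ j) (hji1 : j + 1 ≠ i) :
    tGen l i * tGen l j = tGen l j * tGen l i :=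
  PresentedGroup.mk_eq_mk_of_mul_inv_mem (Or.inr (Or.inl ⟨i, j, hij, hij1, hji1, rfl⟩))

lemma dihedralHom_mul_tGen_mul_inv (g : DihedralGroup (l + 1)) (i : ZMod (l + 1)) :
    dihedralHom l g * tGen l i * (dihedralHom l g)⁻¹ = tGen l (dact g i) :=
  PresentedGroup.mk_eq_mk_of_mul_inv_mem (Or.inr (Or.inr (Or.inr (Or.inl ⟨g, i, rfl⟩))))

lemma garside_vertex (i : ZMod (l + 1)) : garside l i l = dihedralHom l (sr (2 * i)) := by
  have h : garside l i l * dihedralHom l (sr (2 * i)) = 1 :=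
    PresentedGroup.one_of_mem (Or.inr (Or.inr (Or.inr (Or.inr (Or.inl ⟨i, rfl⟩)))))
  rw [eq_inv_of_mul_eq_one_left h, ← map_inv, inv_sr]

lemma garside_edge {i j : ZMod (l + 1)} (hij : i ≠ j) :
    garside l i ((j - i).val - 1) * garside l j ((i - j).val - 1) =
      dihedralHom l (sr (i + j)) := by
  have h : garside l i ((j - i).val - 1) * garside l j ((i - j).val - 1) *
      dihedralHom l (sr (i + j)) = 1 :=
    PresentedGroup.one_of_mem (Or.inr (Or.inr (Or.inr (Or.inr (Or.inr ⟨i, j, hij, rfl⟩)))))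
  rw [eq_inv_of_mul_eq_one_left h, ← map_inv, inv_sr]

lemma chain_zero (i : ZMod (l + 1)) : chain l i 0 = 1 := by
  simp [chain, chainF]

lemma chain_succ (i : ZMod (l + 1)) (m : ℕ) :
    chain l i (m + 1) = chain l i m * tGen l (i + m + 1) := by
  rw [chain, chainF_succ, map_mul]
  rfl

lemma garside_zero (i : ZMod (l + 1)) : garside l i 0 = 1 := by
  simp [garside, garsideF]

lemma garside_succ (i : ZMod (l + 1)) (m : ℕ) :
    garside l i (m + 1) = chain l i (m + 1) * garside l i m := by
  rw [garside, garsideF_succ, map_mul]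
  rfl

lemma garside_sub_mul_garside {k : ℕ} (hk : 0 < k) (hkl : k ≤ l) (i : ZMod (l + 1)) :
    garside l (i - k) (k - 1) * garside l i (l - k) = dihedralHom l (sr (2 * i - k)) := by
  have hk0 := ZMod.natCast_ne_zero_of_le hk hkl
  have h := garside_edge (i := i - (k : ZMod (l + 1))) (j := i) (sub_eq_self.not.mpr hk0)
  rwa [sub_sub_cancel, sub_sub_cancel_left, ZMod.neg_val, if_neg hk0,
    ZMod.val_natCast_of_lt (by omega), show l + 1 - k - 1 = l - k by omega,
    show i - k + i = 2 * i - k by ring] at h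

lemma garside_sub_one (hl : 1 ≤ l) (i : ZMod (l + 1)) :
    garside l i (l - 1) = dihedralHom l (sr (2 * i - 1)) := by
  simpa [garside_zero] using garside_sub_mul_garside one_pos hl i

lemma chain_eq_rotation (hl : 1 ≤ l) (i : ZMod (l + 1)) : chain l i l = dihedralHom l (r (-1)) := by
  have h := garside_succ i (l - 1)
  rw [Nat.sub_add_cancel hl, garside_vertex, garside_sub_one hl] at h
  rw [eq_mul_inv_of_mul_eq h.symm, ← map_inv, inv_sr, ← map_mul, sr_mul_sr]
  ring_nf

lemma tGen_mul_self (hl : 2 ≤ l) (j : ZMod (l + 1)) : tGen l j * tGen l j = 1 := by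
  have h2 : garside l (j + 1 - 2) 1 = tGen l j := by
    rw [garside_succ, garside_zero, mul_one, chain_succ, chain_zero, one_mul]
    ring_nf
  have hgarside : garside l (j + 1) (l - 2) = (tGen l j)⁻¹ * dihedralHom l (sr (2 * j)) := by
    have h := garside_sub_mul_garside two_pos hl (j + 1)
    push_cast at h
    rw [h2, ← eq_inv_mul_iff_mul_eq] at h
    rw [h]
    ring_nf
  have hchain : chain l (j + 1) (l - 1) = dihedralHom l (r (-1)) * tGen l j := by
    have h := garside_succ (j + 1) (l - 2)
    rw [show l - 2 + 1 = l - 1 by omega, garside_sub_one (by omega), hgarside] at h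
    rw [eq_mul_inv_of_mul_eq h.symm, mul_inv_rev, inv_inv, ← mul_assoc, ← map_inv, inv_sr,
      ← map_mul, sr_mul_sr]
    ring_nf
  have h := chain_succ (j + 1) (l - 1)
  rw [Nat.sub_add_cancel (by omega), chain_eq_rotation (by omega), hchain,
    Nat.cast_sub (by omega), Nat.cast_one, show j + 1 + ((l : ZMod (l + 1)) - 1) + 1 = j by
      linear_combination ZMod.natCast_self' l, mul_assoc, left_eq_mul] at h
  exact h

lemma chain_mem {K : Subgroup (ReducedArtinAhat l)} (hK : ∀ i, tGen l i ∈ K)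
    (i : ZMod (l + 1)) (m : ℕ) : chain l i m ∈ K := by
  induction m with
  | zero => exact chain_zero i ▸ one_mem K
  | succ m ih => exact chain_succ i m ▸ mul_mem ih (hK _)

lemma garside_mem {K : Subgroup (ReducedArtinAhat l)} (hK : ∀ i, tGen l i ∈ K)
    (i : ZMod (l + 1)) (m : ℕ) : garside l i m ∈ K := by
  induction m with
  | zero => exact garside_zero i ▸ one_mem K
  | succ m ih => exact garside_succ i m ▸ mul_mem (chain_mem hK i (m + 1)) ih

/-- `t_0, …, t_{l-1}` generate: their product is the rotation, which conjugates `t_0` to every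
`t_i`, and the Garside relation `Δ_0 = g_0` gives the reflections. -/
theorem closure_tGen_eq_top (hl : 2 ≤ l) :
    Subgroup.closure ((fun k : ℕ ↦ tGen l k) '' Set.Iio l) = ⊤ := by
  set K := Subgroup.closure ((fun k : ℕ ↦ tGen l k) '' Set.Iio l)
  have hchain : ∀ m ≤ l, chain l (-1) m ∈ K := by
    intro m hm
    induction m with
    | zero => exact chain_zero _ ▸ one_mem K
    | succ m ih =>
      rw [chain_succ, neg_add_cancel_comm]
      exact mul_mem (ih (by omega)) (Subgroup.subset_closure ⟨m, by simp; omega, rfl⟩)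
  have hr : ∀ a, dihedralHom l (r a) ∈ K := by
    have hr1 : dihedralHom l (r 1) ∈ K := by
      rw [← inv_inv (r 1), inv_r, map_inv, ← chain_eq_rotation (by omega) (-1)]
      exact inv_mem (hchain l le_rfl)
    intro a
    rw [← ZMod.natCast_zmod_val a, ← r_one_pow, map_pow]
    exact pow_mem hr1 _
  have ht : ∀ x, tGen l x ∈ K := by
    intro x
    have ht0 : tGen l 0 ∈ K := Subgroup.subset_closure ⟨0, by simp; omega, by simp⟩
    rw [show x = dact (r (-x)) 0 by simp [dact], ← dihedralHom_mul_tGen_mul_inv]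
    exact mul_mem (mul_mem (hr _) ht0) (inv_mem (hr _))
  have hsr : ∀ a, dihedralHom l (sr a) ∈ K := by
    intro a
    rw [← zero_add a, ← sr_mul_r, map_mul, ← mul_zero 2, ← garside_vertex]
    exact mul_mem (garside_mem ht 0 l) (hr a)
  rw [eq_top_iff, ← PresentedGroup.closure_range_of, Subgroup.closure_le]
  rintro _ ⟨i | g | g, rfl⟩
  exacts [ht i, hr g, hsr g]

theorem isCoxeterTypeA_tGen (hl : 2 ≤ l) : IsCoxeterTypeA l (fun k : ℕ ↦ tGen l k) where
  mul_self i _ := tGen_mul_self hl _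
  braid i _ := by
    push_cast
    exact tGen_braid _
  comm i j hij hj := by
    apply tGen_comm <;> push_cast [← Nat.cast_succ] <;> rw [Ne, ZMod.natCast_inj_of_le] <;>
      omega

/-- For `l > 1`, the natural surjection of the reduced Artin group of type `Â_l` onto
the finite Weyl group `S_{l+1}` (the linear Weyl group modulo its center) is an
isomorphism; the generator `t_i` maps to the transposition `(i, i+1)`. -/
theorem reducedArtin_Ahat_iso_symmGroup (l : ℕ) (hl : 2 ≤ l) :
    ∃ φ : ReducedArtinAhat l ≃* Equiv.Perm (ZMod (l + 1)),
      ∀ i : ZMod (l + 1),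
        φ (PresentedGroup.of (Sum.inl i)) = Equiv.swap i (i + 1) := by
  obtain ⟨hfinite, hcard⟩ := (isCoxeterTypeA_tGen hl).finite_closure_and_card_le
  rw [closure_tGen_eq_top hl] at hfinite hcard
  have : Finite (ReducedArtinAhat l) := Subgroup.topEquiv.finite_iff.mp hfinite
  have hbij : Function.Bijective (toPerm hl) := by
    refine (toPerm_surjective hl).bijective_of_nat_card_le ?_
    rwa [Nat.card_perm, Nat.card_zmod, ← Subgroup.card_top]
  exact ⟨MulEquiv.ofBijective _ hbij, toPerm_of_inl hl⟩

end Stmt2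
end

section
/- An element α ∈ Q_r (r ≤ 8) satisfies α·α = −2 if and only if α is the difference of two mutually orthogonal exceptional vectors of Λ_{1,r}. -/
/-!
STATEMENT 10: An element `α ∈ Q_r` (`r ≤ 8`) satisfies `α·α = −2` if and only if `α` is
the difference of two mutually orthogonal exceptional vectors of `Λ_{1,r}`.
-/

namespace Stmt10

/-- The Lorentzian lattice `Λ_{1,r} = ℤ^{r+1}` with orthogonal basis `l, e_1, ..., e_r`,
`l·l = 1`, `e_i·e_i = −1`; index `0` is `l` and index `i.succ` is `e_i`. -/
def form (r : ℕ) (x y : Fin (r + 1) → ℤ) : ℤ :=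
  x 0 * y 0 - ∑ i : Fin r, x i.succ * y i.succ

/-- The basis vector `l`. -/
def lvec (r : ℕ) : Fin (r + 1) → ℤ := fun j => if j = 0 then 1 else 0

/-- The basis vector `e_i`. -/
def evec (r : ℕ) (i : Fin r) : Fin (r + 1) → ℤ := fun j => if j = i.succ then 1 else 0

/-- The anticanonical vector `k = 3l − e_1 − ⋯ − e_r`. -/
def kvec (r : ℕ) : Fin (r + 1) → ℤ := fun j => if j = 0 then 3 else -1

/-- An exceptional vector: `e·e = −1` and `e·k = 1`. -/
def IsExc (r : ℕ) (e : Fin (r + 1) → ℤ) : Prop :=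
  form r e e = -1 ∧ form r e (kvec r) = 1

lemma form_comm (r : ℕ) (x y : Fin (r + 1) → ℤ) : form r x y = form r y x := by
  simp [form, mul_comm]

lemma form_sub_left (r : ℕ) (x y z : Fin (r + 1) → ℤ) :
    form r (x - y) z = form r x z - form r y z := by
  simp [form, sub_mul, Finset.sum_sub_distrib]; ring

lemma form_add_left (r : ℕ) (x y z : Fin (r + 1) → ℤ) :
    form r (x + y) z = form r x z + form r y z := by
  simp [form, add_mul, Finset.sum_add_distrib]; ring

lemma form_sub_right (r : ℕ) (x y z : Fin (r + 1) → ℤ) :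
    form r x (y - z) = form r x y - form r x z := by
  rw [form_comm, form_sub_left, form_comm r y x, form_comm r z x]

lemma form_add_right (r : ℕ) (x y z : Fin (r + 1) → ℤ) :
    form r x (y + z) = form r x y + form r x z := by
  rw [form_comm, form_add_left, form_comm r y x, form_comm r z x]

lemma form_evec_left (r : ℕ) (i : Fin r) (y : Fin (r + 1) → ℤ) :
    form r (evec r i) y = -(y i.succ) := by
  simp [form, evec, (Fin.succ_ne_zero i).symm, Fin.succ_inj, Finset.sum_ite_eq']

lemma evec_exc (r : ℕ) (i : Fin r) : IsExc r (evec r i) := by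
  constructor
  · rw [form_evec_left]; simp [evec]
  · rw [form_evec_left]; simp [kvec, Fin.succ_ne_zero i]

lemma exists_pm_one (r : ℕ) (hr : r ≤ 8) (a0 : ℤ) (a : Fin r → ℤ)
    (h1 : 3 * a0 + ∑ i, a i = 0) (h2 : ∑ i, a i * a i = a0 * a0 + 2) :
    ∃ i, a i = 1 ∨ a i = -1 := by
  by_contra h
  push_neg at h
  have hkey : ∀ i, 2 * |a i| ≤ a i * a i := by
    intro i
    obtain ⟨h1', h2'⟩ := h i
    rcases le_or_gt 0 (a i) with h' | h'
    · rw [abs_of_nonneg h']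
      have : a i = 0 ∨ 2 ≤ a i := by omega
      rcases this with h'' | h''
      · simp [h'']
      · nlinarith
    · rw [abs_of_neg h']
      have : a i ≤ -2 := by omega
      nlinarith
  -- 6 |a0| ≤ a0^2 + 2
  have habs : |∑ i, a i| ≤ ∑ i, |a i| := Finset.abs_sum_le_sum_abs _ _
  have hsum : ∑ i, a i = -(3 * a0) := by linarith
  have h6 : 6 * |a0| ≤ a0 * a0 + 2 := by
    have h2abs : 2 * ∑ i, |a i| ≤ ∑ i, a i * a i := by
      rw [Finset.mul_sum]
      exact Finset.sum_le_sum fun i _ => hkey i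
    have : |∑ i, a i| = 3 * |a0| := by
      rw [hsum, abs_neg, abs_mul]; norm_num
    nlinarith
  -- Cauchy-Schwarz: 9 a0^2 ≤ r * (a0^2 + 2) ≤ 8 (a0^2 + 2)
  have hCS : (∑ i, a i) ^ 2 ≤ ((Finset.univ : Finset (Fin r)).card : ℤ) * ∑ i, a i ^ 2 :=
    sq_sum_le_card_mul_sum_sq (s := (Finset.univ : Finset (Fin r))) (f := a)
  have hcard : (((Finset.univ : Finset (Fin r))).card : ℤ) = (r : ℤ) := by simp
  have hsq : ∑ i, (a i) ^ 2 = ∑ i, a i * a i := by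
    apply Finset.sum_congr rfl; intro i _; ring
  have h16 : a0 * a0 ≤ 16 := by
    rw [hcard, hsq, hsum, h2] at hCS
    have hr' : (r : ℤ) ≤ 8 := by exact_mod_cast hr
    have hpos : (0:ℤ) ≤ a0 * a0 + 2 := by nlinarith [mul_self_nonneg a0]
    nlinarith
  have ha0 : a0 = 0 := by
    have hb : 0 ≤ |a0| := abs_nonneg a0
    have hb2 : |a0| * |a0| = a0 * a0 := abs_mul_abs_self a0
    have hb4 : |a0| ≤ 4 := by nlinarith
    have hb1 : |a0| ≤ 1 := by nlinarith
    have hb0 : |a0| ≤ 0 := by nlinarith [mul_nonneg hb (by linarith : (0:ℤ) ≤ 1 - |a0|)]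
    exact abs_eq_zero.mp (le_antisymm hb0 hb)
  subst ha0
  simp only [mul_zero, zero_add, mul_zero] at h2
  -- now ∑ a i * a i = 2 but each a i with |a i| ≠ 1
  have h2' : 2 * ∑ i, |a i| ≤ 2 := by
    rw [Finset.mul_sum]
    calc ∑ i, 2 * |a i| ≤ ∑ i, a i * a i := Finset.sum_le_sum fun i _ => hkey i
    _ = 2 := h2
  have hall : ∀ i, a i = 0 := by
    intro i
    have hle : |a i| ≤ ∑ j, |a j| :=
      Finset.single_le_sum (fun j _ => abs_nonneg (a j)) (Finset.mem_univ i)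
    have h1' : |a i| ≤ 1 := by omega
    have h2'' := abs_le.mp h1'
    have h3' := (h i).1
    have h4' := (h i).2
    omega
  rw [Finset.sum_congr rfl fun i _ => by rw [hall i]] at h2
  simp at h2

theorem root_iff_difference_of_orthogonal_exceptional (r : ℕ) (hr : r ≤ 8)
    (x : Fin (r + 1) → ℤ) (hx : form r x (kvec r) = 0) :
    form r x x = -2 ↔
      ∃ e f : Fin (r + 1) → ℤ,
        IsExc r e ∧ IsExc r f ∧ form r e f = 0 ∧ x = e - f := by
  constructor
  · intro hxx
    have hx' : 3 * x 0 + ∑ i : Fin r, x i.succ = 0 := by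
      simp only [form, kvec, if_pos rfl] at hx
      rw [Finset.sum_congr rfl (fun i _ => by rw [if_neg (Fin.succ_ne_zero i)])] at hx
      simp only [mul_neg, mul_one, if_true] at hx
      rw [Finset.sum_neg_distrib] at hx
      linarith
    have hxx' : ∑ i : Fin r, x i.succ * x i.succ = x 0 * x 0 + 2 := by
      simp only [form] at hxx; linarith
    obtain ⟨i, hi⟩ := exists_pm_one r hr (x 0) (fun i => x i.succ) hx' hxx'
    have hex : form r (evec r i) x = -(x i.succ) := form_evec_left r i x
    rcases hi with hi | hi
    · refine ⟨evec r i, evec r i - x, evec_exc r i, ⟨?_, ?_⟩, ?_, by abel⟩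
      · rw [form_sub_left, form_sub_right, form_sub_right,
          (evec_exc r i).1, hex, form_comm r x (evec r i), hex, hi, hxx]
        ring
      · rw [form_sub_left, (evec_exc r i).2, hx]; ring
      · rw [form_sub_right, (evec_exc r i).1, hex, hi]; ring
    · refine ⟨evec r i + x, evec r i, ⟨?_, ?_⟩, evec_exc r i, ?_, by abel⟩
      · rw [form_add_left, form_add_right, form_add_right,
          (evec_exc r i).1, hex, form_comm r x (evec r i), hex, hi, hxx]
        ring
      · rw [form_add_left, (evec_exc r i).2, hx]; ring
      · rw [form_add_left, (evec_exc r i).1, form_comm r x (evec r i), hex, hi]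
        ring
  · rintro ⟨e, f, he, hf, hef, rfl⟩
    rw [form_sub_left, form_sub_right, form_sub_right, he.1, hf.1, hef,
      form_comm r f e, hef]
    ring

end Stmt10
end

section
/- Consider the family of curves over Spec C[[t]] given by y² = x²(x² + 2bx + c) with b, c ∈ C[[t]] nonzero, ord(b²) > ord(c) > 0, d := b² − c with √d, √c ∈ C[[t]]. Let σ be a C[[t]]-point of the smooth locus of the form σ(t) = (a + O(t), ε a² + O(t)) with a ≠ 0 and ε ∈ {±1} (lying on the branch y = εx² + ... of the special fiber). Define u := (x² + y + x√c)/(x² + y − x√c). Then σ*u is a unit of C((t)) lying in C[[t]] with value at t = 0 equal to ε. -/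
/-!
On the branch `ε = 1` the denominator `x² + y - x√c` has constant term `2a² ≠ 0`, so it is a unit
and `σ*u` has value `2a² / 2a² = 1`. On the branch `ε = -1` both numerator and denominator vanish
at `t = 0`. There `x² - y` is a unit and the curve equation reads
`(x² + y)(x² - y) = -x²(2bx + c)`, while `ord b > ord √c` gives `2bx + c = √c · r` with `r(0) = 0`.
Multiplying through by `x² - y` and cancelling the common factor `x√c` leaves
`σ*u = -(x² - y - xr) / (x² - y + xr)`, whose value is `-1`.
-/

open PowerSeries

namespace PowerSeries

variable {k : Type*} [Field k]

theorem constantCoeff_eq_zero_of_sq_eq_of_order_pos {s c : k⟦X⟧} (hs : s ^ 2 = c)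
    (hc : 0 < c.order) : constantCoeff s = 0 := by
  have : constantCoeff c = 0 := order_ne_zero_iff_constCoeff_eq_zero.mp hc.ne'
  simpa [← hs] using this

theorem exists_eq_mul_constantCoeff_eq_zero_of_order_lt {f g : k⟦X⟧} (h : f.order < g.order) :
    ∃ q, g = f * q ∧ constantCoeff q = 0 := by
  have hf : f ≠ 0 := order_finite_iff_ne_zero.mp (h.trans_le le_top)
  set n := f.order.toNat
  have hn : (n : ℕ∞) = f.order := ENat.natCast_toNat (order_eq_top.not.mpr hf)
  obtain ⟨r, hr⟩ : X ^ (n + 1) ∣ g := X_pow_dvd_iff.mpr fun i hi ↦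
    coeff_of_lt_order i <| lt_of_le_of_lt (by rw [← hn]; exact_mod_cast Nat.lt_succ_iff.mp hi) h
  have hu : constantCoeff (divXPowOrder f) ≠ 0 :=
    constantCoeff_divXPowOrder_eq_zero_iff.not.mpr hf
  refine ⟨X * r * (divXPowOrder f)⁻¹, ?_, by simp⟩
  calc g = X ^ n * divXPowOrder f * (divXPowOrder f)⁻¹ * (X * r) := by
          rw [mul_assoc _ (divXPowOrder f), PowerSeries.mul_inv_cancel _ hu, hr]; ring
    _ = f * (X * r * (divXPowOrder f)⁻¹) := by rw [X_pow_order_mul_divXPowOrder]; ring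

theorem exists_isUnit_mul_eq_of_mul_eq_mul {D N E F : k⟦X⟧} {e : k} (he : e ≠ 0)
    (hE : constantCoeff E ≠ 0) (hF : constantCoeff F = e * constantCoeff E) (h : D * F = N * E) :
    ∃ w, IsUnit w ∧ D * w = N ∧ constantCoeff w = e := by
  have hw : constantCoeff (F * E⁻¹) = e := by
    rw [map_mul, constantCoeff_inv, hF, mul_inv_cancel_right₀ hE]
  refine ⟨F * E⁻¹, isUnit_iff_constantCoeff.mpr (hw ▸ he.isUnit), ?_, hw⟩
  rw [← mul_assoc, h, mul_assoc, PowerSeries.mul_inv_cancel _ hE, mul_one]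

end PowerSeries

section TacnodalFamily

variable {k : Type*} [Field k] {b c s x y : k⟦X⟧}

theorem exists_two_mul_mul_add_eq_mul (hs : s ^ 2 = c) (hc : 0 < c.order)
    (hord : c.order < (b ^ 2).order) (x : k⟦X⟧) :
    ∃ r, 2 * b * x + c = s * r ∧ constantCoeff r = 0 := by
  have hsb : s.order < b.order := by
    rw [← hs, order_pow, order_pow] at hord
    exact lt_of_nsmul_lt_nsmul_right 2 hord
  obtain ⟨q, rfl, hq⟩ := exists_eq_mul_constantCoeff_eq_zero_of_order_lt hsb
  refine ⟨2 * q * x + s, by rw [← hs]; ring, ?_⟩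
  simp [hq, constantCoeff_eq_zero_of_sq_eq_of_order_pos hs hc]

theorem exists_mul_eq_mul_of_branch [NeZero (2 : k)] (hs : s ^ 2 = c) (hc : 0 < c.order)
    (hord : c.order < (b ^ 2).order) (hcurve : y ^ 2 = x ^ 2 * (x ^ 2 + 2 * b * x + c))
    (hx0 : constantCoeff x ≠ 0) {ε : k} (hε : ε = 1 ∨ ε = -1)
    (hy0 : constantCoeff y = ε * constantCoeff x ^ 2) :
    ∃ E F, (x ^ 2 + y - x * s) * F = (x ^ 2 + y + x * s) * E ∧
      constantCoeff E ≠ 0 ∧ constantCoeff F = ε * constantCoeff E := by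
  have hs0 := constantCoeff_eq_zero_of_sq_eq_of_order_pos hs hc
  have hx2 : 2 * constantCoeff x ^ 2 ≠ 0 := mul_ne_zero two_ne_zero (pow_ne_zero 2 hx0)
  rcases hε with rfl | rfl
  · refine ⟨x ^ 2 + y - x * s, x ^ 2 + y + x * s, mul_comm _ _, ?_, ?_⟩
    · simpa [hy0, hs0, two_mul] using hx2
    · simp [hs0]
  · obtain ⟨r, hr, hr0⟩ := exists_two_mul_mul_add_eq_mul hs hc hord x
    refine ⟨x ^ 2 - y + x * r, -(x ^ 2 - y - x * r),
      by linear_combination 2 * hcurve + 2 * x ^ 2 * hr, ?_, ?_⟩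
    · simpa [hy0, hr0, two_mul] using hx2
    · simp [hr0]

end TacnodalFamily

theorem section_specialization_general (b c s2 : PowerSeries ℂ) (hc : c ≠ 0)
    (hord : c.order < (b ^ 2).order) (hc0 : 0 < c.order)
    (hs2 : s2 ^ 2 = c)
    (xσ yσ : PowerSeries ℂ) (a ε : ℂ) (ha : a ≠ 0) (hε : ε = 1 ∨ ε = -1)
    (hcurve : yσ ^ 2 = xσ ^ 2 * (xσ ^ 2 + 2 * b * xσ + c))
    (hx0 : PowerSeries.constantCoeff xσ = a)
    (hy0 : PowerSeries.constantCoeff yσ = ε * a ^ 2) :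
    (xσ ^ 2 + yσ - xσ * s2) ≠ 0 ∧
    ∃ w : PowerSeries ℂ, IsUnit w ∧
      (xσ ^ 2 + yσ - xσ * s2) * w = xσ ^ 2 + yσ + xσ * s2 ∧
      PowerSeries.constantCoeff w = ε := by
  subst hx0
  obtain ⟨E, F, hcross, hE, hF⟩ := exists_mul_eq_mul_of_branch hs2 hc0 hord hcurve ha hε hy0
  have hxs : xσ * s2 ≠ 0 :=
    mul_ne_zero (by rintro rfl; exact ha (map_zero _)) (by rintro rfl; exact hc (by simp [← hs2]))
  have hD : xσ ^ 2 + yσ - xσ * s2 ≠ 0 := by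
    intro hD
    have hE0 : E ≠ 0 := fun h ↦ hE (by simp [h])
    have hN : xσ ^ 2 + yσ + xσ * s2 = 0 :=
      (mul_eq_zero.mp (hcross.symm.trans (by simp [hD]))).resolve_right hE0
    have h2 : (2 : ℂ⟦X⟧) ≠ 0 :=
      ne_of_apply_ne constantCoeff (by rw [map_ofNat, map_zero]; exact two_ne_zero)
    exact mul_ne_zero h2 hxs (by linear_combination hN - hD)
  have hε0 : ε ≠ 0 := by rcases hε with rfl | rfl <;> norm_num
  exact ⟨hD, exists_isUnit_mul_eq_of_mul_eq_mul hε0 hE hF hcross⟩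

theorem section_specialization (b c s2 : PowerSeries ℂ) (hb : b ≠ 0) (hc : c ≠ 0)
    (hord : c.order < (b ^ 2).order) (hc0 : 0 < c.order)
    (hs2 : s2 ^ 2 = c) (hsd : ∃ sd : PowerSeries ℂ, sd ^ 2 = b ^ 2 - c)
    (hd : b ^ 2 - c ≠ 0)
    (xσ yσ : PowerSeries ℂ) (a ε : ℂ) (ha : a ≠ 0) (hε : ε = 1 ∨ ε = -1)
    (hcurve : yσ ^ 2 = xσ ^ 2 * (xσ ^ 2 + 2 * b * xσ + c))
    (hx0 : PowerSeries.constantCoeff xσ = a)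
    (hy0 : PowerSeries.constantCoeff yσ = ε * a ^ 2) :
    (xσ ^ 2 + yσ - xσ * s2) ≠ 0 ∧
    ∃ w : PowerSeries ℂ, IsUnit w ∧
      (xσ ^ 2 + yσ - xσ * s2) * w = xσ ^ 2 + yσ + xσ * s2 ∧
      PowerSeries.constantCoeff w = ε :=
  section_specialization_general b c s2 hc hord hc0 hs2 xσ yσ a ε ha hε hcurve hx0 hy0
end

section
/- Let F(x,y) = (y − x²)² + t^r G(x,y) ∈ C[[t]][x,y] with r ≥ 1, G a polynomial quartic in (x,y) not divisible by t, G_0(x,y) not divisible by y − x², and G_0(0,0) ≠ 0. If γ = (γ_x, γ_y) with γ_x, γ_y ∈ C[[t]], γ(0) = (0,0), satisfies F(γ_x, γ_y) = 0, then r is even and γ_y − γ_x² has t-adic order exactly r/2. -/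
/-!
Write `u = γ_y - γ_x²` and `g = G(γ_x, γ_y)`. Since `γ(0) = (0,0)`, the constant term of `g`
is `G_0(0,0) ≠ 0`, so `g` is a unit of `ℂ[[t]]`. The equation `u² = -t^r g` then gives
`2 · ord u = r`.
-/

open PowerSeries

theorem MvPolynomial.map_eval_eq_of_comp_eq {σ R S : Type*} [CommSemiring R] [CommSemiring S]
    (f : R →+* S) (p : MvPolynomial σ R) {a b : σ → R} (h : f ∘ a = f ∘ b) :
    f (eval a p) = f (eval b p) := by
  rw [eval₂_comp, eval₂_comp, h]

theorem PowerSeries.even_and_order_eq_of_sq_eq_X_pow_mul {R : Type*} [Semiring R]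
    [NoZeroDivisors R] [Nontrivial R] {u g : R⟦X⟧} {r : ℕ} (hg : constantCoeff g ≠ 0)
    (h : u ^ 2 = X ^ r * g) : Even r ∧ u.order = (r / 2 : ℕ) := by
  have hg0 : g.order = 0 := by
    by_contra hne
    exact hg (order_ne_zero_iff_constCoeff_eq_zero.mp hne)
  have hord : 2 • u.order = r := by
    simpa [order_pow, order_mul, hg0] using congrArg order h
  obtain ⟨n, hn⟩ : ∃ n : ℕ, n = u.order :=
    ENat.ne_top_iff_exists.mp fun htop => by simp [htop] at hord
  have hr : r = n + n := by
    rw [← hn, two_nsmul] at hord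
    exact_mod_cast hord.symm
  exact ⟨⟨n, hr⟩, by rw [← hn]; congr 1; omega⟩

theorem order_of_tacnodal_section_general (r : ℕ)
    (G : MvPolynomial (Fin 2) (PowerSeries ℂ))
    (hG00 : (PowerSeries.constantCoeff : PowerSeries ℂ →+* ℂ)
        (MvPolynomial.eval (fun _ => (0 : PowerSeries ℂ)) G) ≠ 0)
    (γx γy : PowerSeries ℂ)
    (hx0 : (PowerSeries.constantCoeff : PowerSeries ℂ →+* ℂ) γx = 0)
    (hy0 : (PowerSeries.constantCoeff : PowerSeries ℂ →+* ℂ) γy = 0)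
    (hF : (γy - γx ^ 2) ^ 2 +
        (PowerSeries.X : PowerSeries ℂ) ^ r *
          MvPolynomial.eval (fun i => if i = 0 then γx else γy) G = 0) :
    Even r ∧ (γy - γx ^ 2).order = (r / 2 : ℕ) := by
  set g := MvPolynomial.eval (fun i : Fin 2 => if i = 0 then γx else γy) G
  have hγ : constantCoeff ∘ (fun i : Fin 2 => if i = 0 then γx else γy) =
      constantCoeff ∘ fun _ => (0 : ℂ⟦X⟧) := by
    funext i
    by_cases hi : i = 0 <;> simp [hi, hx0, hy0]
  have hg : constantCoeff (-g) ≠ 0 := by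
    rwa [map_neg, neg_ne_zero, MvPolynomial.map_eval_eq_of_comp_eq _ _ hγ]
  exact even_and_order_eq_of_sq_eq_X_pow_mul hg (by linear_combination hF)

theorem order_of_tacnodal_section (r : ℕ) (hr : 1 ≤ r)
    (G : MvPolynomial (Fin 2) (PowerSeries ℂ))
    (hdeg : G.totalDegree ≤ 4)
    (hGt : ¬ ∀ m, (PowerSeries.X : PowerSeries ℂ) ∣ MvPolynomial.coeff m G)
    (hG0 : ¬ ((MvPolynomial.X 1 - MvPolynomial.X 0 ^ 2 : MvPolynomial (Fin 2) ℂ) ∣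
        MvPolynomial.map ((PowerSeries.constantCoeff : PowerSeries ℂ →+* ℂ)) G))
    (hG00 : (PowerSeries.constantCoeff : PowerSeries ℂ →+* ℂ)
        (MvPolynomial.eval (fun _ => (0 : PowerSeries ℂ)) G) ≠ 0)
    (γx γy : PowerSeries ℂ)
    (hx0 : (PowerSeries.constantCoeff : PowerSeries ℂ →+* ℂ) γx = 0)
    (hy0 : (PowerSeries.constantCoeff : PowerSeries ℂ →+* ℂ) γy = 0)
    (hF : (γy - γx ^ 2) ^ 2 +
        (PowerSeries.X : PowerSeries ℂ) ^ r *
          MvPolynomial.eval (fun i => if i = 0 then γx else γy) G = 0) :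
    Even r ∧ (γy - γx ^ 2).order = (r / 2 : ℕ) :=
  order_of_tacnodal_section_general r G hG00 γx γy hx0 hy0 hF
end
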